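/- arXiv:1007.1333 — 3 statements merged into one kernel-verified Lean document; each statement's English description precedes it below -/
import Mathlib

section
/- Let G_{v₀} = (V, E) be a nice graph and let τ be the minimum cardinality of a vertex cover of G. Then every deterministic Büchi automaton B over V_♮ with L_B(B) = L(G_{v₀}) has a state type of cardinality at least 2·|V| + τ. -/
/-- The run of the deterministic automaton `M` from state `q` on the infinite
word `x`. -/
def DFA.runFrom {α σ : Type*} (M : DFA α σ) (q : σ) (x : ℕ → α) : ℕ → σ
  | 0 => q
  | n + 1 => M.step (M.runFrom q x n) (x n)

/-- The Büchi language of a deterministic automaton: the set of infinite words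
whose run from the initial state visits the accepting set infinitely often. -/
def BuchiLang {α σ : Type*} (M : DFA α σ) : Set (ℕ → α) :=
  {x | {n | M.runFrom M.start x n ∈ M.accept}.Infinite}

/-- `w` is a finite word of the form `v₀^{i₀} v₁^{i₁} ⋯ v_n^{i_n}` where
`v₀ v₁ ⋯ v_n` is a path in `G` starting at the distinguished vertex `v₀`, with
`n ≥ 0`, `i₀ ≥ 0`, `i_j ≥ 1` for `1 ≤ j ≤ n`, and last vertex `v_n = u`. -/
def IsStutterPath {V : Type} (G : SimpleGraph V) (v₀ : V) (w : List V) (u : V) : Prop :=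
  ∃ (n : ℕ) (v : ℕ → V) (i : ℕ → ℕ),
    v 0 = v₀ ∧ (∀ j, j < n → G.Adj (v j) (v (j + 1))) ∧
    (∀ j, 1 ≤ j → j ≤ n → 1 ≤ i j) ∧ v n = u ∧
    w = ((List.range (n + 1)).map (fun j => List.replicate (i j) (v j))).flatten

/-- Trace-words: infinite words `v₀^{i₀} v₁^{i₁} v₂^{i₂} ⋯ ∈ V^ω` with `i₀ ≥ 0`,
`i_j ≥ 1` for `j ≥ 1`, along an infinite path `v₀ v₁ v₂ ⋯` of `G` starting at `v₀`.
The function `f` assigns to each position of the word the index of its block. -/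
def IsTraceWord {V : Type} (G : SimpleGraph V) (v₀ : V) (α : ℕ → V ⊕ Unit) : Prop :=
  ∃ (v : ℕ → V) (f : ℕ → ℕ),
    v 0 = v₀ ∧ (∀ j, G.Adj (v j) (v (j + 1))) ∧
    f 0 ≤ 1 ∧ (∀ n, f n ≤ f (n + 1) ∧ f (n + 1) ≤ f n + 1) ∧
    (∀ m, ∃ n, m ≤ f n) ∧ (∀ n, α n = Sum.inl (v (f n)))

/-- ♮-words: infinite words over `V ⊕ {♮}` (with `♮ = Sum.inr ()`) having a
prefix of the form `v₀^{i₀} v₁^{i₁} ⋯ v_n^{i_n} ♮ v_n`. -/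
def IsNaturalWord {V : Type} (G : SimpleGraph V) (v₀ : V) (α : ℕ → V ⊕ Unit) : Prop :=
  ∃ (w : List V) (u : V), IsStutterPath G v₀ w u ∧
    (∀ k : Fin w.length, α k = Sum.inl (w.get k)) ∧
    α w.length = Sum.inr () ∧ α (w.length + 1) = Sum.inl u

/-- The characteristic language of the nice graph `G` with initial vertex `v₀`. -/
def CharLang {V : Type} (G : SimpleGraph V) (v₀ : V) : Set (ℕ → V ⊕ Unit) :=
  {α | IsTraceWord G v₀ α ∨ IsNaturalWord G v₀ α}

/-- `q` is a `v`-state of `B`: it is reached from the initial state on some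
finite word `v₀^{i₀} v₁^{i₁} ⋯ v_n^{i_n} ∈ V^*` along a path of `G` ending in `v`. -/
def IsVState {V σ : Type} (G : SimpleGraph V) (v₀ : V) (B : DFA (V ⊕ Unit) σ)
    (v : V) (q : σ) : Prop :=
  ∃ w : List V, IsStutterPath G v₀ w v ∧ B.eval (w.map Sum.inl) = q

/-- `q` is a `v♮`-state of `B`: it is reached from some `v`-state upon reading `♮`. -/
def IsNatState {V σ : Type} (G : SimpleGraph V) (v₀ : V) (B : DFA (V ⊕ Unit) σ)
    (v : V) (q : σ) : Prop :=
  ∃ q', IsVState G v₀ B v q' ∧ q = B.step q' (Sum.inr ())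

/-!
From a `v`-state the word `♮ v^ω` is accepted (the whole input is then a ♮-word), and from a
`w`-state with `w ≠ v` it is rejected. From a `v♮`-state `v^ω` is accepted, and every word not
starting with `v`, in particular `♮ v^ω`, is rejected. Hence `v`-states of distinct vertices are
distinct, so are `v♮`-states, and no `v`-state is a `w♮`-state.

Every vertex `v` has a non-accepting `v`-state: a path to `v` followed by `v^ω` is eventually
constant, hence neither a trace-word nor a ♮-word, so its run is eventually non-accepting. For an
edge `{a, b}`, the trace-word that follows a path to `a` and then bounces between `a` and `b` is
accepted, so `a` or `b` has an accepting `v`-state. These vertices form a vertex cover, which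
gives `2 |V| + τ` distinct states.
-/

theorem Nat.infinite_setOf_succ_iff {p : ℕ → Prop} :
    {n | p (n + 1)}.Infinite ↔ {n | p n}.Infinite := by
  rw [← Nat.frequently_atTop_iff_infinite, ← Nat.frequently_atTop_iff_infinite]
  conv_rhs => rw [← Filter.map_add_atTop_eq_nat 1, Filter.frequently_map]

namespace DFA

variable {α σ : Type*} (M : DFA α σ)

def BuchiAcceptsFrom (q : σ) (x : ℕ → α) : Prop :=
  {n | M.runFrom q x n ∈ M.accept}.Infinite

theorem mem_buchiLang {x : ℕ → α} : x ∈ BuchiLang M ↔ M.BuchiAcceptsFrom M.start x := Iff.rfl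

theorem runFrom_eq_evalFrom (q : σ) (x : ℕ → α) (n : ℕ) :
    M.runFrom q x n = M.evalFrom q ((List.range n).map x) := by
  induction n with
  | zero => rfl
  | succ n ih =>
    rw [List.range_succ, List.map_append, List.map_singleton, evalFrom_append_singleton, ← ih]
    rfl

theorem runFrom_cons_succ (q : σ) (a : α) (x : Stream' α) (n : ℕ) :
    M.runFrom q (Stream'.cons a x) (n + 1) = M.runFrom (M.step q a) x n := by
  induction n with
  | zero => rfl
  | succ n ih => exact congrArg (M.step · (x n)) ih

theorem buchiAcceptsFrom_step_iff {q : σ} {a : α} {x : Stream' α} :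
    M.BuchiAcceptsFrom (M.step q a) x ↔ M.BuchiAcceptsFrom q (Stream'.cons a x) := by
  simp only [BuchiAcceptsFrom, ← runFrom_cons_succ]
  exact Nat.infinite_setOf_succ_iff (p := fun n => M.runFrom q (Stream'.cons a x) n ∈ M.accept)

theorem buchiAcceptsFrom_evalFrom_iff {q : σ} {u : List α} {x : Stream' α} :
    M.BuchiAcceptsFrom (M.evalFrom q u) x ↔ M.BuchiAcceptsFrom q (u ++ₛ x) := by
  induction u generalizing q with
  | nil => rfl
  | cons a u ih => rw [evalFrom_cons, ih, buchiAcceptsFrom_step_iff, Stream'.cons_append_stream]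

end DFA

namespace Stream'

variable {α : Type*}

theorem append_apply_of_lt {u : List α} {x : Stream' α} {k : ℕ} (hk : k < u.length) :
    (u ++ₛ x) k = u[k] :=
  get_append_left k u x hk

theorem append_apply_length_add (u : List α) (x : Stream' α) (n : ℕ) :
    (u ++ₛ x) (u.length + n) = x n :=
  get_append_right n u x

end Stream'

section Words

variable {V : Type} {G : SimpleGraph V} {v₀ : V}

theorem IsStutterPath.getLastD_eq {w : List V} {u : V} (h : IsStutterPath G v₀ w u) :
    w.getLastD v₀ = u := by
  obtain ⟨n, v, i, rfl, -, hi, rfl, rfl⟩ := h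
  cases n with
  | zero => simpa using List.eq_of_mem_replicate (n := i 0 + 1) List.getLastD_mem_cons
  | succ n =>
    have : i (n + 1) ≠ 0 := Nat.one_le_iff_ne_zero.mp (hi _ n.succ_pos le_rfl)
    simp [List.range_succ, List.getLast?_replicate, this]

theorem IsStutterPath.eq {w : List V} {u u' : V} (h : IsStutterPath G v₀ w u)
    (h' : IsStutterPath G v₀ w u') : u = u' :=
  h.getLastD_eq.symm.trans h'.getLastD_eq

theorem isStutterPath_map_range_append_replicate {s : ℕ → V} (h0 : s 0 = v₀) {n : ℕ}
    (hadj : ∀ j < n, G.Adj (s j) (s (j + 1))) (k : ℕ) :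
    IsStutterPath G v₀ ((List.range n).map s ++ List.replicate (k + 1) (s n)) (s n) := by
  refine ⟨n, s, fun j => if j < n then 1 else k + 1, h0, hadj,
    fun j _ _ => by dsimp only; split_ifs <;> omega, rfl, ?_⟩
  rw [List.range_succ, List.map_append, List.flatten_append]
  simp only [List.map_singleton, List.flatten_singleton, lt_irrefl, if_false]
  congr 1
  rw [List.map_congr_left (g := fun j => [s j]) fun j hj => by simp [List.mem_range.mp hj]]
  rw [List.map_eq_flatMap, List.flatMap_def]

theorem IsTraceWord.exists_ne_succ {α : ℕ → V ⊕ Unit} (h : IsTraceWord G v₀ α) (N : ℕ) :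
    ∃ n, N ≤ n ∧ α (n + 1) ≠ α n := by
  obtain ⟨v, f, -, hadj, -, hstep, hunb, hα⟩ := h
  obtain ⟨n, hn, hfn⟩ : ∃ n, N ≤ n ∧ f (n + 1) ≠ f n := by
    by_contra! hconst
    have hfN : ∀ k, f (N + k) = f N := fun k => by
      induction k with
      | zero => rfl
      | succ k ih => rw [← Nat.add_assoc, hconst _ (by omega), ih]
    obtain ⟨m, hm⟩ := hunb (f N + 1)
    have := monotone_nat_of_le_succ (fun n => (hstep n).1) (Nat.le_add_left m N)
    have := hfN m
    omega
  refine ⟨n, hn, fun h => G.ne_of_adj (hadj (f n)) ?_⟩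
  rw [hα, hα, show f (n + 1) = f n + 1 by have := hstep n; omega] at h
  exact (Sum.inl_injective h).symm

theorem IsTraceWord.ne_inr {α : ℕ → V ⊕ Unit} (h : IsTraceWord G v₀ α) (n : ℕ) :
    α n ≠ Sum.inr () := by
  obtain ⟨v, f, -, -, -, -, -, hα⟩ := h
  simp [hα]

theorem isTraceWord_of_adj {s : ℕ → V} (h0 : s 0 = v₀) (hadj : ∀ n, G.Adj (s n) (s (n + 1))) :
    IsTraceWord G v₀ (fun n => Sum.inl (s n)) :=
  ⟨s, id, h0, hadj, zero_le_one, fun n => ⟨n.le_succ, le_rfl⟩, fun m => ⟨m, le_rfl⟩,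
    fun _ => rfl⟩

theorem isNaturalWord_append_iff {w : List V} {v : V} (hw : IsStutterPath G v₀ w v)
    {x : Stream' (V ⊕ Unit)} (hx0 : x 0 = Sum.inr ()) :
    IsNaturalWord G v₀ (w.map Sum.inl ++ₛ x) ↔ x 1 = Sum.inl v := by
  have hα : ∀ k (hk : k < w.length), (w.map Sum.inl ++ₛ x) k = Sum.inl w[k] := fun k hk => by
    rw [Stream'.append_apply_of_lt (by simpa using hk), List.getElem_map]
  have hαw : (w.map Sum.inl ++ₛ x) w.length = Sum.inr () := by
    simpa [hx0] using Stream'.append_apply_length_add (w.map Sum.inl) x 0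
  have hαw1 : (w.map Sum.inl ++ₛ x) (w.length + 1) = x 1 := by
    simpa using Stream'.append_apply_length_add (w.map Sum.inl) x 1
  constructor
  · rintro ⟨w', u, hw', hpre, hnat, hend⟩
    have hlen : w'.length = w.length := by
      rcases lt_trichotomy w'.length w.length with hlt | heq | hgt
      · simp [hα _ hlt] at hnat
      · exact heq
      · simpa [hαw] using hpre ⟨w.length, hgt⟩
    obtain rfl : w' = w := List.ext_get hlen fun k h₁ h₂ =>
      Sum.inl_injective ((hpre ⟨k, h₁⟩).symm.trans (hα k h₂))
    rw [← hαw1, hend, hw'.eq hw]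
  · intro h1
    exact ⟨w, v, hw, fun k => hα k k.2, hαw, hαw1.trans h1⟩

theorem mem_charLang_append_iff {w : List V} {v : V} (hw : IsStutterPath G v₀ w v)
    {x : Stream' (V ⊕ Unit)} (hx0 : x 0 = Sum.inr ()) :
    w.map Sum.inl ++ₛ x ∈ CharLang G v₀ ↔ x 1 = Sum.inl v := by
  refine (or_iff_right fun ht => ht.ne_inr w.length ?_).trans (isNaturalWord_append_iff hw hx0)
  simpa [hx0] using Stream'.append_apply_length_add (w.map Sum.inl) x 0

end Words

theorem SimpleGraph.Walk.exists_adj_seq_eventually_mem_edge {V : Type} {G : SimpleGraph V}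
    {u a b : V} (p : G.Walk u a) (hab : G.Adj a b) :
    ∃ s : ℕ → V, s 0 = u ∧ (∀ n, G.Adj (s n) (s (n + 1))) ∧
      ∀ n, p.length ≤ n → s n = a ∨ s n = b := by
  have bounce : ∀ k, G.Adj (if Even k then a else b) (if Even (k + 1) then a else b) := by
    intro k
    rcases Nat.even_or_odd k with hk | hk
    · simpa [hk, Nat.even_add_one] using hab
    · simpa [Nat.not_even_iff_odd.mpr hk, Nat.even_add_one] using hab.symm
  refine ⟨fun n => if n < p.length then p.getVert n else if Even (n - p.length) then a else b,
    ?_, fun n => ?_, fun n hn => ?_⟩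
  · by_cases h : 0 < p.length
    · simp [h]
    · simp [h, p.eq_of_length_eq_zero (by omega)]
  · rcases lt_trichotomy (n + 1) p.length with hlt | heq | hgt
    · simpa [hlt, show n < p.length by omega] using p.adj_getVert_succ (by omega : n < p.length)
    · simpa [heq, show n < p.length by omega] using p.adj_getVert_succ (by omega : n < p.length)
    · simpa [show ¬ n < p.length by omega, show ¬ n + 1 < p.length by omega,
        show n + 1 - p.length = n - p.length + 1 by omega] using bounce (n - p.length)
  · simp only [show ¬ n < p.length by omega, if_false]
    split_ifs <;> simp

section Automaton

variable {V σ : Type} {G : SimpleGraph V} {v₀ : V} {B : DFA (V ⊕ Unit) σ}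

theorem IsVState.buchiAcceptsFrom_iff (hL : BuchiLang B = CharLang G v₀) {v : V} {q : σ}
    (hq : IsVState G v₀ B v q) {x : Stream' (V ⊕ Unit)} (hx0 : x 0 = Sum.inr ()) :
    B.BuchiAcceptsFrom q x ↔ x 1 = Sum.inl v := by
  obtain ⟨w, hw, rfl⟩ := hq
  rw [DFA.eval, DFA.buchiAcceptsFrom_evalFrom_iff]
  exact (Set.ext_iff.mp hL _).trans (mem_charLang_append_iff hw hx0)

theorem IsNatState.buchiAcceptsFrom_iff (hL : BuchiLang B = CharLang G v₀) {v : V} {p : σ}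
    (hp : IsNatState G v₀ B v p) {x : Stream' (V ⊕ Unit)} :
    B.BuchiAcceptsFrom p x ↔ x 0 = Sum.inl v := by
  obtain ⟨q, hq, rfl⟩ := hp
  rw [DFA.buchiAcceptsFrom_step_iff]
  exact hq.buchiAcceptsFrom_iff hL rfl

theorem IsVState.eq (hL : BuchiLang B = CharLang G v₀) {v w : V} {q : σ}
    (hv : IsVState G v₀ B v q) (hw : IsVState G v₀ B w q) : v = w :=
  Sum.inl_injective <| (hw.buchiAcceptsFrom_iff hL rfl).mp <|
    (hv.buchiAcceptsFrom_iff hL (x := .cons (.inr ()) (.const (.inl v))) rfl).mpr rfl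

theorem IsNatState.eq (hL : BuchiLang B = CharLang G v₀) {v w : V} {p : σ}
    (hv : IsNatState G v₀ B v p) (hw : IsNatState G v₀ B w p) : v = w :=
  Sum.inl_injective <| (hw.buchiAcceptsFrom_iff hL).mp <|
    (hv.buchiAcceptsFrom_iff hL (x := .const (.inl v))).mpr rfl

theorem IsVState.not_isNatState (hL : BuchiLang B = CharLang G v₀) {v w : V} {q : σ}
    (hv : IsVState G v₀ B v q) (hw : IsNatState G v₀ B w q) : False :=
  Sum.inr_ne_inl <| (hw.buchiAcceptsFrom_iff hL).mp <|
    (hv.buchiAcceptsFrom_iff hL (x := .cons (.inr ()) (.const (.inl v))) rfl).mpr rfl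

theorem isVState_runFrom {s : ℕ → V} (h0 : s 0 = v₀) {n : ℕ}
    (hadj : ∀ j < n, G.Adj (s j) (s (j + 1))) {k : ℕ} (hconst : ∀ j ≤ k, s (n + j) = s n) :
    IsVState G v₀ B (s n) (B.runFrom B.start (fun j => Sum.inl (s j)) (n + k + 1)) := by
  have hword : (List.range (n + k + 1)).map s =
      (List.range n).map s ++ List.replicate (k + 1) (s n) := by
    rw [Nat.add_assoc, List.range_add, List.map_append, List.map_map]
    congr 1
    rw [List.eq_replicate_iff]
    simp +contextual [hconst]
  refine ⟨_, isStutterPath_map_range_append_replicate h0 hadj k, ?_⟩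
  rw [DFA.runFrom_eq_evalFrom, DFA.eval, ← hword, List.map_map]
  rfl

theorem exists_isVState_not_mem_accept (hL : BuchiLang B = CharLang G v₀) (hconn : G.Connected)
    (v : V) : ∃ q, IsVState G v₀ B v q ∧ q ∉ B.accept := by
  obtain ⟨p⟩ := hconn.preconnected v₀ v
  have hp : ∀ j, p.length ≤ j → p.getVert j = v := fun j hj => p.getVert_of_length_le hj
  have hrej : ¬ B.BuchiAcceptsFrom B.start (fun j => Sum.inl (p.getVert j)) := by
    rw [← DFA.mem_buchiLang, hL]
    rintro (ht | ⟨w, u, -, -, hnat, -⟩)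
    · obtain ⟨n, hn, hne⟩ := ht.exists_ne_succ p.length
      exact hne (by rw [hp n hn, hp (n + 1) (by omega)])
    · exact Sum.inl_ne_inr hnat
  obtain ⟨N, hN⟩ := (Set.not_infinite.mp hrej).bddAbove
  have hq := isVState_runFrom (B := B) (k := N) p.getVert_zero
    (fun j hj => p.adj_getVert_succ hj) (fun j _ => by rw [hp _ (by omega), hp _ le_rfl])
  rw [hp _ le_rfl] at hq
  exact ⟨_, hq, fun hacc => by have := hN hacc; omega⟩

theorem exists_isVState_mem_accept_of_adj (hL : BuchiLang B = CharLang G v₀)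
    (hconn : G.Connected) {a b : V} (hab : G.Adj a b) :
    (∃ q, IsVState G v₀ B a q ∧ q ∈ B.accept) ∨ (∃ q, IsVState G v₀ B b q ∧ q ∈ B.accept) := by
  obtain ⟨p⟩ := hconn.preconnected v₀ a
  obtain ⟨s, h0, hadj, hend⟩ := p.exists_adj_seq_eventually_mem_edge hab
  have hacc : B.BuchiAcceptsFrom B.start (fun n => Sum.inl (s n)) := by
    rw [← DFA.mem_buchiLang, hL]
    exact Or.inl (isTraceWord_of_adj h0 hadj)
  obtain ⟨m, hm, hlt⟩ := hacc.exists_gt p.length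
  obtain ⟨n, rfl⟩ : ∃ n, m = n + 1 := Nat.exists_eq_add_one.mpr (by omega)
  have hq := isVState_runFrom (B := B) (n := n) (k := 0) h0 (fun j _ => hadj j)
    (fun j hj => by rw [Nat.le_zero.mp hj, Nat.add_zero])
  rcases hend n (by omega) with h | h <;> rw [h] at hq
  exacts [Or.inl ⟨_, hq, hm⟩, Or.inr ⟨_, hq, hm⟩]

theorem two_mul_card_add_card_le [Fintype V] [Fintype σ] (hL : BuchiLang B = CharLang G v₀)
    (hconn : G.Connected) (C : Finset V) (hC : ∀ v ∈ C, ∃ q, IsVState G v₀ B v q ∧ q ∈ B.accept) :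
    2 * Fintype.card V + C.card ≤ Fintype.card σ := by
  choose q hq hq_rej using exists_isVState_not_mem_accept hL hconn
  choose r hr hr_acc using hC
  let p v := B.step (q v) (Sum.inr ())
  have hp : ∀ v, IsNatState G v₀ B v (p v) := fun v => ⟨q v, hq v, rfl⟩
  let f : V ⊕ V ⊕ C → σ := Sum.elim q (Sum.elim p fun v => r v v.2)
  have hf : f.Injective := by
    refine Function.Injective.sumElim (fun v w h => (hq v).eq hL (h ▸ hq w))
      (Function.Injective.sumElim (fun v w h => (hp v).eq hL (h ▸ hp w))
        (fun v w h => Subtype.ext ((hr v v.2).eq hL (h ▸ hr w w.2)))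
        (fun v w h => (hr w w.2).not_isNatState hL (h ▸ hp v))) ?_
    rintro v (w | w) h
    · exact (hq v).not_isNatState hL ((show q v = p w from h) ▸ hp w)
    · exact hq_rej v ((show q v = r w w.2 from h) ▸ hr_acc w w.2)
  simpa [two_mul, add_assoc] using Fintype.card_le_of_injective f hf

end Automaton

theorem state_lower_bound_of_min_cover_general {V : Type} [Fintype V]
    (G : SimpleGraph V) (v₀ : V) (hconn : G.Connected)
    (τ : ℕ)
    (hτ : IsLeast {k : ℕ | ∃ C : Finset V,
        (∀ a b : V, G.Adj a b → a ∈ C ∨ b ∈ C) ∧ C.card = k} τ) :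
    ∀ (σ : Type) (_ : Fintype σ) (B : DFA (V ⊕ Unit) σ),
      BuchiLang B = CharLang G v₀ → 2 * Fintype.card V + τ ≤ Fintype.card σ := by
  intro σ _ B hL
  classical
  let C := Finset.univ.filter fun v => ∃ q, IsVState G v₀ B v q ∧ q ∈ B.accept
  have hcover : ∀ a b, G.Adj a b → a ∈ C ∨ b ∈ C := fun a b hab => by
    simpa [C] using exists_isVState_mem_accept_of_adj hL hconn hab
  calc 2 * Fintype.card V + τ ≤ 2 * Fintype.card V + C.card := by
        gcongr; exact hτ.2 ⟨C, hcover, rfl⟩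
    _ ≤ Fintype.card σ := two_mul_card_add_card_le hL hconn C (by simp [C])

theorem state_lower_bound_of_min_cover {V : Type} [Fintype V]
    (G : SimpleGraph V) (v₀ : V) (hconn : G.Connected) (hcard : 1 < Fintype.card V)
    (τ : ℕ)
    (hτ : IsLeast {k : ℕ | ∃ C : Finset V,
        (∀ a b : V, G.Adj a b → a ∈ C ∨ b ∈ C) ∧ C.card = k} τ) :
    ∀ (σ : Type) (_ : Fintype σ) (B : DFA (V ⊕ Unit) σ),
      BuchiLang B = CharLang G v₀ → 2 * Fintype.card V + τ ≤ Fintype.card σ :=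
  state_lower_bound_of_min_cover_general G v₀ hconn τ hτ
end

section
/- Let G_{v₀} = (V, E) be a nice graph and let C be a vertex cover of G. Then there exists a deterministic Büchi automaton over the alphabet V_♮ whose state type has cardinality 2·|V| + |C| + 2 (the states being V × {r, ♮}, C × {a}, an accepting sink ⊤, and a rejecting sink ⊥) and whose Büchi language equals L(G_{v₀}). -/
/-!
The automaton remembers the current vertex `v` of the path read so far. It stays in `(v, r)`
while `v` is repeated; on a neighbour `u` of `v` it moves to `(u, a)` if `u ∈ C` and to `(u, r)`
otherwise; on `♮` it goes to `(v, ♮)`, from which only a repetition of `v` leads to the accepting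
sink `⊤`; every other letter leads to the rejecting sink `⊥`. So the words whose run reaches `⊤`
are exactly the ♮-words, and a run avoiding both sinks reads a path from `v₀` with repetitions.
As every edge has an endpoint in `C`, of any two consecutive moves of a path one enters `C`;
hence such a run visits the accepting states `C × {a}` infinitely often iff the path moves
infinitely often, that is, iff the word is a trace-word.
-/

open Relation

namespace DFA

variable {α σ : Type*} (M : DFA α σ) {q s : σ} {x : ℕ → α} {n m : ℕ}

lemma runFrom_succ : M.runFrom q x (n + 1) = M.step (M.runFrom q x n) (x n) := rfl

lemma runFrom_eq_of_le (hs : ∀ a, M.step s a = s) (hn : M.runFrom q x n = s) (hnm : n ≤ m) :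
    M.runFrom q x m = s := by
  induction m, hnm using Nat.le_induction with
  | base => exact hn
  | succ m _ ih => rw [runFrom_succ, ih, hs]

lemma mem_buchiLang_of_runFrom_eq (hs : ∀ a, M.step s a = s) (hacc : s ∈ M.accept)
    (hn : M.runFrom M.start x n = s) : x ∈ BuchiLang M :=
  (Set.Ici_infinite n).mono fun m hm => by
    rw [Set.mem_ofPred_eq, M.runFrom_eq_of_le hs hn hm]
    exact hacc

lemma runFrom_ne_of_mem_buchiLang (hs : ∀ a, M.step s a = s) (hrej : s ∉ M.accept)
    (hx : x ∈ BuchiLang M) : M.runFrom M.start x n ≠ s := fun hn =>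
  hx <| (Set.finite_Iio n).subset fun m hm => by
    by_contra hnm
    exact hrej (M.runFrom_eq_of_le hs hn (not_lt.1 hnm) ▸ hm)

end DFA

section StutterWalk

variable {V : Type} (G : SimpleGraph V) (v₀ : V)

inductive StutterWalk : List V → V → Prop
  | nil : StutterWalk [] v₀
  | snoc {w : List V} {u x : V} : StutterWalk w u → ReflGen G.Adj u x → StutterWalk (w ++ [x]) x

variable {G v₀}

lemma StutterWalk.append_replicate {w : List V} {u : V} (h : StutterWalk G v₀ w u) (k : ℕ) :
    StutterWalk G v₀ (w ++ List.replicate k u) u := by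
  induction k with
  | zero => simpa using h
  | succ k ih => simpa [List.replicate_succ'] using ih.snoc .refl

lemma flatten_map_range_succ {β : Type*} (g : ℕ → List β) (n : ℕ) :
    ((List.range (n + 1)).map g).flatten = ((List.range n).map g).flatten ++ g n := by
  simp [List.range_succ]

lemma flatten_map_range_congr {β : Type*} {g g' : ℕ → List β} {n : ℕ}
    (h : ∀ j < n, g j = g' j) :
    ((List.range n).map g).flatten = ((List.range n).map g').flatten := by
  rw [List.map_congr_left fun j hj => h j (List.mem_range.1 hj)]

lemma IsStutterPath.stutterWalk {w : List V} {u : V} (h : IsStutterPath G v₀ w u) :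
    StutterWalk G v₀ w u := by
  obtain ⟨n, v, i, rfl, hadj, hi, rfl, rfl⟩ := h
  induction n with
  | zero => simpa using StutterWalk.nil.append_replicate (i 0)
  | succ n ih =>
    obtain ⟨k, hk⟩ := Nat.exists_eq_add_of_le' (hi (n + 1) (by omega) le_rfl)
    have hw := ih (fun j hj => hadj j (by omega)) (fun j h1 h2 => hi j h1 (by omega))
    simpa [flatten_map_range_succ _ (n + 1), hk, List.replicate_succ] using
      (hw.snoc (.single (hadj n (by omega)))).append_replicate k

lemma IsStutterPath.nil : IsStutterPath G v₀ [] v₀ :=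
  ⟨0, fun _ => v₀, fun _ => 0, rfl, by simp, by omega, rfl, rfl⟩

lemma IsStutterPath.snoc {w : List V} {u x : V} (h : IsStutterPath G v₀ w u)
    (hux : ReflGen G.Adj u x) : IsStutterPath G v₀ (w ++ [x]) x := by
  obtain ⟨n, v, i, h0, hadj, hi, rfl, rfl⟩ := h
  cases hux with
  | refl =>
    refine ⟨n, v, Function.update i n (i n + 1), h0, hadj, fun j h1 h2 => ?_, rfl, ?_⟩
    · rcases eq_or_ne j n with rfl | hj
      · simp
      · simpa [hj] using hi j h1 h2
    · rw [flatten_map_range_succ _ n, flatten_map_range_succ _ n, List.append_assoc]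
      congr 1
      · exact flatten_map_range_congr fun j hj => by simp [hj.ne]
      · simp [List.replicate_succ']
  | single hvx =>
    refine ⟨n + 1, Function.update v (n + 1) x, Function.update i (n + 1) 1, ?_, ?_, ?_,
      by simp, ?_⟩
    · simpa using h0
    · intro j hj
      rcases Nat.lt_succ_iff_lt_or_eq.1 hj with hj | rfl
      · rw [Function.update_of_ne (by omega), Function.update_of_ne (by omega)]
        exact hadj j hj
      · simpa using hvx
    · intro j h1 h2
      rcases Nat.lt_succ_iff_lt_or_eq.1 (Nat.lt_succ_of_le h2) with hj | rfl
      · simpa [hj.ne] using hi j h1 (by omega)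
      · simp
    · rw [flatten_map_range_succ _ (n + 1)]
      congr 1
      · exact flatten_map_range_congr fun j hj => by simp [hj.ne]
      · simp

lemma isStutterPath_iff_stutterWalk {w : List V} {u : V} :
    IsStutterPath G v₀ w u ↔ StutterWalk G v₀ w u := by
  refine ⟨IsStutterPath.stutterWalk, fun h => ?_⟩
  induction h with
  | nil => exact .nil
  | snoc _ hux ih => exact ih.snoc hux

end StutterWalk

section LazyWalk

variable {V : Type} {G : SimpleGraph V} {v₀ : V}

def IsLazyWalk (G : SimpleGraph V) (x : ℕ → V) : Prop := ∀ n, ReflGen G.Adj (x n) (x (n + 1))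

lemma infinite_setOf_ne_succ {F : ℕ → ℕ} (hmono : Monotone F)
    (hunb : ∀ m, ∃ n, m ≤ F n) :
    {n | F (n + 1) ≠ F n}.Infinite := by
  intro hfin
  obtain ⟨N, hN⟩ := hfin.bddAbove
  have hconst : ∀ n, N + 1 ≤ n → F n = F (N + 1) := fun n hn => by
    induction n, hn using Nat.le_induction with
    | base => rfl
    | succ n hn ih => rw [← ih]; by_contra h; exact absurd (hN h) (by omega)
  obtain ⟨n, hn⟩ := hunb (F (N + 1) + 1)
  rcases le_total n (N + 1) with h | h
  · exact absurd (hmono h) (by omega)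
  · exact absurd (hconst n h) (by omega)

lemma IsTraceWord.exists_lazyWalk {α : ℕ → V ⊕ Unit} (h : IsTraceWord G v₀ α) :
    ∃ x : ℕ → V, x 0 = v₀ ∧ IsLazyWalk G x ∧ {n | x (n + 1) ≠ x n}.Infinite ∧
      ∀ n, α n = .inl (x (n + 1)) := by
  obtain ⟨v, f, hv0, hadj, hf0, hf, hunb, hα⟩ := h
  let F : ℕ → ℕ := fun n => n.casesOn 0 f
  have hF : ∀ n, F n ≤ F (n + 1) ∧ F (n + 1) ≤ F n + 1 := fun
    | 0 => ⟨Nat.zero_le _, hf0⟩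
    | n + 1 => hf n
  have hstep : ∀ n, F (n + 1) = F n ∨ F (n + 1) = F n + 1 := fun n => by
    have := hF n; omega
  refine ⟨fun n => v (F n), hv0, fun n => ?_, ?_, hα⟩
  · show ReflGen G.Adj (v (F n)) (v (F (n + 1)))
    rcases hstep n with h | h
    · rw [h]
    · rw [h]
      exact .single (hadj _)
  · refine (infinite_setOf_ne_succ (monotone_nat_of_le_succ fun n => (hF n).1)
      fun m => let ⟨n, hn⟩ := hunb m; ⟨n + 1, hn⟩).mono fun n hn => ?_
    rcases hstep n with h | h
    · exact absurd h hn
    · simpa [h] using (hadj (F n)).ne'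

noncomputable def blockVertex (x : ℕ → V) : ℕ → V
  | 0 => x 0
  | j + 1 => x (Nat.nth (fun n => x (n + 1) ≠ x n) j + 1)

lemma eq_blockVertex_count [DecidableEq V] (x : ℕ → V) (n : ℕ) :
    x n = blockVertex x (Nat.count (fun k => x (k + 1) ≠ x k) n) := by
  induction n with
  | zero => rfl
  | succ n ih =>
    by_cases h : x (n + 1) = x n
    · simpa [Nat.count_succ, h] using ih
    · simp [Nat.count_succ, h, blockVertex, Nat.nth_count (p := fun k => x (k + 1) ≠ x k) h]

lemma adj_blockVertex {x : ℕ → V} (hx : IsLazyWalk G x)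
    (hinf : {n | x (n + 1) ≠ x n}.Infinite) (j : ℕ) :
    G.Adj (blockVertex x j) (blockVertex x (j + 1)) := by
  set t := Nat.nth (fun n => x (n + 1) ≠ x n) j
  have hmove : x (t + 1) ≠ x t := Nat.nth_mem_of_infinite hinf j
  have hj : blockVertex x j = x t := by
    classical
    rw [eq_blockVertex_count x t, Nat.count_nth_of_infinite hinf]
  rw [hj]
  exact ((reflGen_iff _ _ _).1 (hx t)).resolve_left hmove

lemma isTraceWord_of_lazyWalk {α : ℕ → V ⊕ Unit} {x : ℕ → V} (h0 : x 0 = v₀)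
    (hx : IsLazyWalk G x) (hinf : {n | x (n + 1) ≠ x n}.Infinite)
    (hα : ∀ n, α n = .inl (x (n + 1))) : IsTraceWord G v₀ α := by
  classical
  set p := fun n => x (n + 1) ≠ x n
  refine ⟨blockVertex x, fun n => Nat.count p (n + 1), h0, adj_blockVertex hx hinf, ?_,
    fun n => ?_, fun m => ⟨Nat.nth p m, ?_⟩, fun n => ?_⟩
  · simp only [Nat.count_succ, Nat.count_zero]
    split <;> omega
  · dsimp only
    rw [Nat.count_succ p (n + 1)]
    split <;> omega
  · show m ≤ Nat.count p (Nat.nth p m + 1)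
    rw [Nat.count_nth_succ_of_infinite hinf]
    omega
  · rw [hα, ← eq_blockVertex_count]

lemma infinite_setOf_ne_and_succ_mem_of_isVertexCover {x : ℕ → V} (hx : IsLazyWalk G x)
    (hinf : {n | x (n + 1) ≠ x n}.Infinite) {C : Set V} (hC : G.IsVertexCover C) :
    {n | x (n + 1) ≠ x n ∧ x (n + 1) ∈ C}.Infinite := by
  have hS : {j | blockVertex x (j + 1) ∈ C}.Infinite :=
    Set.infinite_of_forall_exists_gt fun a =>
      (hC (adj_blockVertex hx hinf (a + 2))).elim (fun h => ⟨a + 1, h, by omega⟩)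
        fun h => ⟨a + 2, h, by omega⟩
  refine (hS.image (Nat.nth_injective hinf).injOn).mono ?_
  rintro _ ⟨j, hj, rfl⟩
  exact ⟨Nat.nth_mem_of_infinite hinf j, hj⟩

end LazyWalk

-- `rest v`, `arrived c` and `natural v` are the paper's states `(v, r)`, `(c, a)` and `(v, ♮)`.
inductive CoverState (V : Type) (C : Finset V) : Type
  | rest (v : V)
  | arrived (c : C)
  | natural (v : V)
  | top
  | bot

namespace CoverState

variable {V : Type} {G : SimpleGraph V} {C : Finset V}

def equivSum : CoverState V C ≃ (V ⊕ V) ⊕ (C ⊕ Bool) where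
  toFun
    | rest v => .inl (.inl v)
    | natural v => .inl (.inr v)
    | arrived c => .inr (.inl c)
    | top => .inr (.inr true)
    | bot => .inr (.inr false)
  invFun
    | .inl (.inl v) => rest v
    | .inl (.inr v) => natural v
    | .inr (.inl c) => arrived c
    | .inr (.inr true) => top
    | .inr (.inr false) => bot
  left_inv q := by cases q <;> rfl
  right_inv s := by rcases s with (_ | _) | (_ | _ | _) <;> rfl

instance [Fintype V] : Fintype (CoverState V C) := .ofEquiv _ equivSum.symm

lemma card_eq [Fintype V] :
    Fintype.card (CoverState V C) = 2 * Fintype.card V + C.card + 2 := by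
  simp [Fintype.card_congr equivSum]
  ring

def vertex : CoverState V C → Option V
  | rest v => some v
  | arrived c => some c
  | natural _ => none
  | top => none
  | bot => none

def accepting : Set (CoverState V C) := insert top (Set.range arrived)

variable [DecidableEq V] (G) [DecidableRel G.Adj] (C)

def enter (u : V) : CoverState V C := if h : u ∈ C then arrived ⟨u, h⟩ else rest u

def leave (v : V) : V ⊕ Unit → CoverState V C
  | .inl u => if u = v then rest v else if G.Adj v u then enter C u else bot
  | .inr () => natural v

def step : CoverState V C → V ⊕ Unit → CoverState V C
  | rest v, a => leave G C v a
  | arrived c, a => leave G C c a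
  | natural v, .inl u => if u = v then top else bot
  | natural _, .inr () => bot
  | top, _ => top
  | bot, _ => bot

variable {G C}

lemma vertex_enter (u : V) : (enter C u).vertex = some u := by
  unfold enter; split <;> rfl

lemma step_of_vertex_eq_some {q : CoverState V C} {v : V} (hq : q.vertex = some v)
    (a : V ⊕ Unit) : step G C q a = leave G C v a := by
  cases q <;> simp_all [vertex, step]

lemma vertex_leave_eq_some {v u : V} {a : V ⊕ Unit} :
    (leave G C v a).vertex = some u ↔ a = .inl u ∧ ReflGen G.Adj v u := by
  rcases a with u' | ⟨⟩
  · simp only [leave, reflGen_iff]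
    split_ifs with h1 h2
    · subst h1
      simpa [vertex, eq_comm] using Or.inl
    · rw [vertex_enter]
      simp_all [eq_comm, h2.ne]
    · simp_all [vertex, eq_comm]
  · simp [leave, vertex]

lemma step_eq_top_or_bot {q : CoverState V C} (hq : q.vertex = none) (a : V ⊕ Unit) :
    step G C q a = top ∨ step G C q a = bot := by
  cases q with
  | rest | arrived => simp [vertex] at hq
  | natural v =>
    rcases a with u | ⟨⟩
    · simp only [step]
      split_ifs <;> simp
    · simp [step]
  | top | bot => simp [step]

lemma vertex_step_eq_some {q : CoverState V C} {a : V ⊕ Unit} {u : V} :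
    (step G C q a).vertex = some u ↔
      ∃ v, q.vertex = some v ∧ a = .inl u ∧ ReflGen G.Adj v u := by
  rcases hq : q.vertex with _ | v
  · rcases step_eq_top_or_bot (G := G) hq a with h | h <;> simp [h, vertex]
  · simp [step_of_vertex_eq_some hq, vertex_leave_eq_some]

lemma enter_mem_accepting {u : V} : enter C u ∈ accepting ↔ u ∈ C := by
  unfold enter
  split <;> simp_all [accepting]

lemma leave_mem_accepting {v : V} {a : V ⊕ Unit} :
    leave G C v a ∈ accepting ↔ ∃ u ∈ C, G.Adj v u ∧ a = .inl u := by
  rcases a with u | ⟨⟩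
  · simp only [leave]
    split_ifs with h1 h2
    · subst h1
      simp [accepting]
    · simp [enter_mem_accepting, h2]
    · simp [accepting, h2]
  · simp [leave, accepting]

lemma leave_ne_top (v : V) (a : V ⊕ Unit) : leave G C v a ≠ top := by
  rcases a with u | ⟨⟩
  · simp only [leave, enter]
    split_ifs <;> simp
  · simp [leave]

lemma eq_and_eq_inr_of_leave_eq_natural {v u : V} {a : V ⊕ Unit} (h : leave G C v a = natural u) :
    v = u ∧ a = .inr () := by
  rcases a with u' | ⟨⟩ <;> simp only [leave, enter] at h
  · split_ifs at h
  · simpa using h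

lemma eq_top_of_step_eq_top {q : CoverState V C} {a : V ⊕ Unit} (h : step G C q a = top) :
    q = top ∨ ∃ v, q = natural v ∧ a = .inl v := by
  cases q with
  | rest v | arrived v => exact absurd h (leave_ne_top _ _)
  | natural v =>
    rcases a with u | ⟨⟩
    · simp only [step] at h
      split_ifs at h with hu
      simp [hu]
    · simp [step] at h
  | top => exact .inl rfl
  | bot => simp [step] at h

lemma vertex_eq_some_of_step_eq_natural {q : CoverState V C} {a : V ⊕ Unit} {v : V}
    (h : step G C q a = natural v) : q.vertex = some v ∧ a = .inr () := by
  rcases hq : q.vertex with _ | w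
  · rcases step_eq_top_or_bot (G := G) hq a with h' | h' <;> simp [h'] at h
  · rw [step_of_vertex_eq_some hq] at h
    obtain ⟨rfl, rfl⟩ := eq_and_eq_inr_of_leave_eq_natural h
    exact ⟨rfl, rfl⟩

end CoverState

lemma forall_fin_append_singleton_iff {V : Type} {α : ℕ → V ⊕ Unit} {w : List V} {x : V} :
    (∀ k : Fin (w ++ [x]).length, α k = .inl ((w ++ [x]).get k)) ↔
      (∀ k : Fin w.length, α k = .inl (w.get k)) ∧ α w.length = .inl x := by
  simp only [Fin.forall_iff, List.get_eq_getElem, List.length_append, List.length_singleton]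
  refine ⟨fun h => ⟨fun k hk => ?_, ?_⟩, fun ⟨hw, hx⟩ k hk => ?_⟩
  · simpa [List.getElem_append_left hk] using h k (by omega)
  · simpa using h w.length (by omega)
  · rcases Nat.lt_succ_iff_lt_or_eq.1 hk with hk | rfl
    · simpa [List.getElem_append_left hk] using hw k hk
    · simpa using hx

section Automaton

variable {V : Type} [DecidableEq V] (G : SimpleGraph V) [DecidableRel G.Adj] (C : Finset V)
  (v₀ : V)

def coverAutomaton : DFA (V ⊕ Unit) (CoverState V C) where
  step := CoverState.step G C
  start := .rest v₀
  accept := CoverState.accepting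

variable {G C v₀} {α : ℕ → V ⊕ Unit}

local notation "run" => DFA.runFrom (coverAutomaton G C v₀) (CoverState.rest v₀) α

open CoverState

lemma vertex_runFrom_eq_some_iff {n : ℕ} {u : V} :
    (run n).vertex = some u ↔ ∃ w : List V, w.length = n ∧
      (∀ k : Fin w.length, α k = .inl (w.get k)) ∧ StutterWalk G v₀ w u := by
  constructor
  · induction n generalizing u with
    | zero =>
      intro h
      obtain rfl : v₀ = u := Option.some_injective _ h
      exact ⟨[], rfl, nofun, .nil⟩
    | succ n ih =>
      intro h
      obtain ⟨v, hv, hαn, hvu⟩ := vertex_step_eq_some.1 h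
      obtain ⟨w, rfl, hpre, hw⟩ := ih hv
      exact ⟨w ++ [u], by simp, forall_fin_append_singleton_iff.2 ⟨hpre, hαn⟩, hw.snoc hvu⟩
  · rintro ⟨w, rfl, hpre, hw⟩
    induction hw with
    | nil => rfl
    | snoc _ hux ih =>
      obtain ⟨hpre, hlast⟩ := forall_fin_append_singleton_iff.1 hpre
      rw [List.length_append, List.length_singleton]
      exact vertex_step_eq_some.2 ⟨_, ih hpre, hlast, hux⟩

lemma exists_runFrom_eq_top_iff :
    (∃ n, run n = top) ↔
      ∃ p u, (run p).vertex = some u ∧ α p = .inr () ∧ α (p + 1) = .inl u := by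
  constructor
  · rintro ⟨n, hn⟩
    induction n with
    | zero => cases hn
    | succ n ih =>
      rcases eq_top_of_step_eq_top hn with h | ⟨u, h, hαn⟩
      · exact ih h
      · cases n with
        | zero => cases h
        | succ p =>
          obtain ⟨hp, hαp⟩ := vertex_eq_some_of_step_eq_natural h
          exact ⟨p, u, hp, hαp, hαn⟩
  · rintro ⟨p, u, hp, hαp, hαp'⟩
    refine ⟨p + 2, ?_⟩
    show step G C (step G C (run p) (α p)) (α (p + 1)) = top
    rw [step_of_vertex_eq_some hp, hαp, hαp']
    simp [leave, step]

lemma mem_buchiLang_coverAutomaton_of_runFrom_eq_top {n : ℕ} (hn : run n = top) :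
    α ∈ BuchiLang (coverAutomaton G C v₀) :=
  DFA.mem_buchiLang_of_runFrom_eq _ (fun _ => rfl) (Set.mem_insert _ _) hn

lemma isNaturalWord_iff_exists_runFrom_eq_top : IsNaturalWord G v₀ α ↔ ∃ n, run n = top := by
  rw [exists_runFrom_eq_top_iff]
  constructor
  · rintro ⟨w, u, hw, hpre, hαw, hαw'⟩
    exact ⟨w.length, u, vertex_runFrom_eq_some_iff.2
      ⟨w, rfl, hpre, isStutterPath_iff_stutterWalk.1 hw⟩, hαw, hαw'⟩
  · rintro ⟨p, u, hp, hαp, hαp'⟩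
    obtain ⟨w, rfl, hpre, hw⟩ := vertex_runFrom_eq_some_iff.1 hp
    exact ⟨w, u, isStutterPath_iff_stutterWalk.2 hw, hpre, hαp, hαp'⟩

lemma isTraceWord_of_mem_buchiLang (hα : α ∈ BuchiLang (coverAutomaton G C v₀))
    (htop : ∀ n, run n ≠ top) : IsTraceWord G v₀ α := by
  have hbot (n : ℕ) : run n ≠ bot :=
    DFA.runFrom_ne_of_mem_buchiLang _ (fun _ => rfl) (by simp [coverAutomaton, accepting]) hα
  have hvert (n : ℕ) : ∃ u, (run n).vertex = some u := by
    rcases hq : (run n).vertex with _ | u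
    · rcases step_eq_top_or_bot (G := G) hq (α n) with h | h
      exacts [absurd h (htop (n + 1)), absurd h (hbot (n + 1))]
    · exact ⟨u, rfl⟩
  choose x hx using hvert
  have hstep (n : ℕ) : α n = .inl (x (n + 1)) ∧ ReflGen G.Adj (x n) (x (n + 1)) := by
    obtain ⟨v, hv, hαn, hvx⟩ := vertex_step_eq_some.1 (hx (n + 1))
    obtain rfl : v = x n := Option.some_injective _ (hv.symm.trans (hx n))
    exact ⟨hαn, hvx⟩
  refine isTraceWord_of_lazyWalk (Option.some_injective _ (hx 0)).symm (fun n => (hstep n).2)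
    (Set.Infinite.of_image (· + 1) (hα.mono ?_)) fun n => (hstep n).1
  rintro (_ | n) hn
  · change rest v₀ ∈ accepting at hn
    simp [accepting] at hn
  · have hleave : leave G C (x n) (α n) ∈ accepting :=
      step_of_vertex_eq_some (G := G) (hx n) _ ▸ hn
    obtain ⟨u, -, hadj, hαn⟩ := leave_mem_accepting.1 hleave
    rw [(hstep n).1, Sum.inl.injEq] at hαn
    exact ⟨n, show x (n + 1) ≠ x n by rw [hαn]; exact hadj.ne', rfl⟩

lemma IsTraceWord.mem_buchiLang_coverAutomaton (hC : G.IsVertexCover C)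
    (h : IsTraceWord G v₀ α) : α ∈ BuchiLang (coverAutomaton G C v₀) := by
  obtain ⟨x, h0, hx, hinf, hα⟩ := h.exists_lazyWalk
  have hvert (n : ℕ) : (run n).vertex = some (x n) := by
    induction n with
    | zero => rw [h0]; rfl
    | succ n ih => exact vertex_step_eq_some.2 ⟨x n, ih, hα n, hx n⟩
  refine ((infinite_setOf_ne_and_succ_mem_of_isVertexCover hx hinf hC).image
    (add_left_injective 1).injOn).mono ?_
  rintro _ ⟨n, ⟨hne, hmem⟩, rfl⟩
  show step G C (run n) (α n) ∈ accepting
  rw [step_of_vertex_eq_some (hvert n), hα n]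
  exact leave_mem_accepting.2 ⟨_, hmem, ((reflGen_iff _ _ _).1 (hx n)).resolve_left hne, rfl⟩

end Automaton

theorem exists_buchi_of_cover_general {V : Type} [Fintype V]
    (G : SimpleGraph V) (v₀ : V)
    (C : Finset V) (hC : ∀ a b : V, G.Adj a b → a ∈ C ∨ b ∈ C) :
    ∃ (σ : Type) (_ : Fintype σ) (B : DFA (V ⊕ Unit) σ),
      Fintype.card σ = 2 * Fintype.card V + C.card + 2 ∧
      BuchiLang B = CharLang G v₀ := by
  classical
  refine ⟨CoverState V C, inferInstance, coverAutomaton G C v₀, CoverState.card_eq, ?_⟩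
  ext α
  by_cases htop : ∃ n, (coverAutomaton G C v₀).runFrom (.rest v₀) α n = .top
  · obtain ⟨n, hn⟩ := htop
    exact iff_of_true (mem_buchiLang_coverAutomaton_of_runFrom_eq_top hn)
      (Or.inr (isNaturalWord_iff_exists_runFrom_eq_top.2 ⟨n, hn⟩))
  · refine ⟨fun h => Or.inl (isTraceWord_of_mem_buchiLang h (not_exists.1 htop)), ?_⟩
    rintro (h | h)
    · exact h.mem_buchiLang_coverAutomaton fun a b => hC a b
    · exact absurd (isNaturalWord_iff_exists_runFrom_eq_top.1 h) htop

theorem exists_buchi_of_cover {V : Type} [Fintype V]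
    (G : SimpleGraph V) (v₀ : V) (hconn : G.Connected) (hcard : 1 < Fintype.card V)
    (C : Finset V) (hC : ∀ a b : V, G.Adj a b → a ∈ C ∨ b ∈ C) :
    ∃ (σ : Type) (_ : Fintype σ) (B : DFA (V ⊕ Unit) σ),
      Fintype.card σ = 2 * Fintype.card V + C.card + 2 ∧
      BuchiLang B = CharLang G v₀ :=
  exists_buchi_of_cover_general G v₀ C hC
end

section
/- Let B = (Q, δ, q₀, F) be a deterministic automaton over a finite alphabet Σ such that every strongly connected component of B that is reachable from q₀ is homogeneous, i.e., consists only of states in F or only of states not in F. Then B is weak: L_B(B) = L_C(B). -/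
/-- State `p` of `M₁` and state `q` of `M₂` are almost equivalent: for every
infinite word, the runs from `p` and from `q` disagree on membership in the
accepting sets only at finitely many positions. -/
def AlmostEquiv {α σ₁ σ₂ : Type*} (M₁ : DFA α σ₁) (M₂ : DFA α σ₂)
    (p : σ₁) (q : σ₂) : Prop :=
  ∀ x : ℕ → α,
    {n : ℕ | (M₁.runFrom p x n ∈ M₁.accept) ≠ (M₂.runFrom q x n ∈ M₂.accept)}.Finite

/-- The co-Büchi language of a deterministic automaton: the set of infinite
words whose run from the initial state leaves the accepting set only finitely
often. -/
def CoBuchiLang {α σ : Type*} (M : DFA α σ) : Set (ℕ → α) :=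
  {x | {n | M.runFrom M.start x n ∉ M.accept}.Finite}

/-- `q` is reachable from `p` in `M` (possibly on the empty word). -/
def Reach {α σ : Type*} (M : DFA α σ) (p q : σ) : Prop :=
  ∃ w : List α, M.evalFrom p w = q

/-!
Past some position, every state of a run over a finite state space recurs infinitely often, so
every later state can reach back to it: the tail of the run stays in the strongly connected
component of a single state reachable from the start. That component is homogeneous, so from
then on the run is either always or never accepting, and for such a run Büchi and co-Büchi
acceptance agree.
-/

open Filter

theorem Filter.frequently_iff_eventually_of_eventually_iff {ι : Type*} {l : Filter ι} [l.NeBot]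
    {p : ι → Prop} {c : Prop} (h : ∀ᶠ i in l, p i ↔ c) : (∃ᶠ i in l, p i) ↔ ∀ᶠ i in l, p i := by
  by_cases hc : c
  · simp only [hc, iff_true] at h
    exact iff_of_true h.frequently h
  · simp only [hc, iff_false] at h
    refine iff_of_false (not_frequently.2 h) fun hp => ?_
    obtain ⟨i, hpi, hnpi⟩ := (hp.and h).exists
    exact hnpi hpi

theorem Filter.eventually_frequently_eq {σ : Type*} [Finite σ] (f : ℕ → σ) :
    ∀ᶠ n in atTop, ∃ᶠ k in atTop, f k = f n := by
  have hrare : ∀ᶠ k in atTop, ∀ s, (¬∃ᶠ j in atTop, f j = s) → f k ≠ s := by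
    refine eventually_all.2 fun s => ?_
    by_cases hs : ∃ᶠ j in atTop, f j = s
    · exact Eventually.of_forall fun _ h => absurd hs h
    · exact (not_frequently.1 hs).mono fun _ hk _ => hk
  exact hrare.mono fun k hk => by_contra fun h => hk (f k) h rfl

namespace DFA

variable {α σ : Type*} (M : DFA α σ)

theorem reach_runFrom (q : σ) (x : ℕ → α) {m n : ℕ} (hmn : m ≤ n) :
    Reach M (M.runFrom q x m) (M.runFrom q x n) := by
  induction hmn with
  | refl => exact ⟨[], rfl⟩
  | @step n _ ih =>
    obtain ⟨w, hw⟩ := ih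
    exact ⟨w ++ [x n], by rw [evalFrom_append_singleton, hw]; rfl⟩

theorem eventually_forall_reach_runFrom [Finite σ] (q : σ) (x : ℕ → α) :
    ∀ᶠ n in atTop, ∀ m, Reach M (M.runFrom q x m) (M.runFrom q x n) :=
  (eventually_frequently_eq (M.runFrom q x)).mono fun n hn m => by
    obtain ⟨k, hk, hmk⟩ := (hn.and_eventually (eventually_ge_atTop m)).exists
    exact hk ▸ M.reach_runFrom q x hmk

end DFA

theorem weak_of_homogeneous_sccs_general {α σ : Type} [Fintype σ]
    (B : DFA α σ)
    (h : ∀ p q : σ, Reach B B.start p → Reach B p q → Reach B q p →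
      (p ∈ B.accept ↔ q ∈ B.accept)) :
    BuchiLang B = CoBuchiLang B := by
  ext x
  set r := B.runFrom B.start x
  obtain ⟨N, hN⟩ := (B.eventually_forall_reach_runFrom B.start x).exists_forall_of_atTop
  have hconst : ∀ᶠ n in atTop, r n ∈ B.accept ↔ r N ∈ B.accept :=
    (eventually_ge_atTop N).mono fun n hn =>
      (h _ _ (B.reach_runFrom _ x N.zero_le) (B.reach_runFrom _ x hn) (hN N le_rfl n)).symm
  simp only [BuchiLang, CoBuchiLang, Set.mem_ofPred_eq, ← Nat.frequently_atTop_iff_infinite,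
    ← eventually_cofinite, Nat.cofinite_eq_atTop]
  exact frequently_iff_eventually_of_eventually_iff hconst

theorem weak_of_homogeneous_sccs {α σ : Type} [Fintype α] [Fintype σ]
    (B : DFA α σ)
    (h : ∀ p q : σ, Reach B B.start p → Reach B p q → Reach B q p →
      (p ∈ B.accept ↔ q ∈ B.accept)) :
    BuchiLang B = CoBuchiLang B :=
  weak_of_homogeneous_sccs_general B h
end
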